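/- arXiv:1111.4245 — 4 statements merged into one kernel-verified Lean document; each statement's English description precedes it below -/
import Mathlib

section
/- Sundman's inequality for N point masses: for positions r_i and velocities v_i in R³ with masses m_i > 0, the angular momentum H = Σ m_i (r_i × v_i), kinetic energy T = (1/2) Σ m_i |v_i|², and polar moment I_p = Σ m_i |r_i|² satisfy |H|² ≤ 2 I_p T. -/
/-!
By Lagrange's identity `|a × b|² = |a|²|b|² - ⟨a, b⟩²`, each term of the angular momentum
satisfies `|m (r × v)| ≤ m |r| |v|`. The triangle inequality and the Cauchy–Schwarz inequality
with weights `m_i` then bound `|H|²` by `(Σ m_i |r_i|²)(Σ m_i |v_i|²) = I_p · 2T`.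
-/

open RealInnerProductSpace

/-- The cross product of two vectors in Euclidean 3-space. -/
noncomputable def cross3 (a b : EuclideanSpace ℝ (Fin 3)) : EuclideanSpace ℝ (Fin 3) :=
  (WithLp.equiv 2 (Fin 3 → ℝ)).symm
    ![a 1 * b 2 - a 2 * b 1, a 2 * b 0 - a 0 * b 2, a 0 * b 1 - a 1 * b 0]

open Finset Matrix WithLp

theorem norm_sum_smul_sq_le {ι E F G : Type*} [Norm E] [Norm F] [SeminormedAddCommGroup G]
    [NormedSpace ℝ G] (B : E → F → G) (hB : ∀ x y, ‖B x y‖ ≤ ‖x‖ * ‖y‖) (s : Finset ι)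
    (m : ι → ℝ) (hm : ∀ i ∈ s, 0 ≤ m i) (x : ι → E) (y : ι → F) :
    ‖∑ i ∈ s, m i • B (x i) (y i)‖ ^ 2 ≤
      (∑ i ∈ s, m i * ‖x i‖ ^ 2) * ∑ i ∈ s, m i * ‖y i‖ ^ 2 := by
  have htriangle : ‖∑ i ∈ s, m i • B (x i) (y i)‖ ≤ ∑ i ∈ s, m i * (‖x i‖ * ‖y i‖) :=
    (norm_sum_le _ _).trans <| sum_le_sum fun i hi => by
      rw [norm_smul, Real.norm_of_nonneg (hm i hi)]
      exact mul_le_mul_of_nonneg_left (hB _ _) (hm i hi)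
  calc ‖∑ i ∈ s, m i • B (x i) (y i)‖ ^ 2
      ≤ (∑ i ∈ s, m i * (‖x i‖ * ‖y i‖)) ^ 2 := pow_le_pow_left₀ (norm_nonneg _) htriangle 2
    _ ≤ (∑ i ∈ s, m i * ‖x i‖ ^ 2) * ∑ i ∈ s, m i * ‖y i‖ ^ 2 :=
      sum_sq_le_sum_mul_sum_of_sq_le_mul s (fun i hi => by have := hm i hi; positivity)
        (fun i hi => by have := hm i hi; positivity) (fun i _ => le_of_eq (by ring))

theorem cross3_eq_toLp_crossProduct (a b : EuclideanSpace ℝ (Fin 3)) :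
    cross3 a b = toLp 2 (ofLp a ⨯₃ ofLp b) := by
  simp [cross3, cross_apply]

theorem norm_cross3_sq (a b : EuclideanSpace ℝ (Fin 3)) :
    ‖cross3 a b‖ ^ 2 = ‖a‖ ^ 2 * ‖b‖ ^ 2 - ⟪a, b⟫ ^ 2 := by
  simp only [← real_inner_self_eq_norm_sq, cross3_eq_toLp_crossProduct,
    EuclideanSpace.inner_eq_star_dotProduct, star_trivial,
    cross_dot_cross, dotProduct_comm (ofLp b) (ofLp a)]
  ring

theorem norm_cross3_le (a b : EuclideanSpace ℝ (Fin 3)) : ‖cross3 a b‖ ≤ ‖a‖ * ‖b‖ := by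
  refine (pow_le_pow_iff_left₀ (norm_nonneg _) (by positivity) two_ne_zero).mp ?_
  rw [norm_cross3_sq, mul_pow]
  nlinarith [sq_nonneg ⟪a, b⟫]

theorem sundman_inequality (N : ℕ) (m : Fin N → ℝ) (hm : ∀ i, 0 < m i)
    (r v : Fin N → EuclideanSpace ℝ (Fin 3)) :
    ‖∑ i, m i • cross3 (r i) (v i)‖ ^ 2 ≤
      2 * (∑ i, m i * ‖r i‖ ^ 2) * ((1 / 2) * ∑ i, m i * ‖v i‖ ^ 2) := by
  calc ‖∑ i, m i • cross3 (r i) (v i)‖ ^ 2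
      ≤ (∑ i, m i * ‖r i‖ ^ 2) * ∑ i, m i * ‖v i‖ ^ 2 :=
        norm_sum_smul_sq_le cross3 norm_cross3_le univ m (fun i _ => (hm i).le) r v
    _ = 2 * (∑ i, m i * ‖r i‖ ^ 2) * ((1 / 2) * ∑ i, m i * ‖v i‖ ^ 2) := by ring
end

section
/- Stability criterion for two-body orbital equilibria: at a critical point r of E(r) = H²/(2(r²+I_s)) − 1/r, i.e. where H² = (r²+I_s)²/r³, the second derivative E''(r) equals (1/r)·(4/(r²+I_s) − 3/r²) (up to the stated formula), and E''(r) > 0 if and only if r² > 3 I_s. -/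
/-!
At a circular orbit the angular momentum is fixed by `E'(r) = 0`, i.e. `H² = (r² + I_s)² / r³`.
Differentiating `E` twice gives `E''(x) = H² (3x² - I_s) / (x² + I_s)³ - 2 / x³`; substituting `H²`
at `x = r` collapses this to `(r² - 3 I_s) / (r³ (r² + I_s))`, whose sign is that of `r² - 3 I_s`.
-/

section EffectivePotential

variable {c I x : ℝ}

theorem hasDerivAt_effectivePotential (hx : x ≠ 0) (hxI : x ^ 2 + I ≠ 0) :
    HasDerivAt (fun y => c / (2 * (y ^ 2 + I)) - 1 / y)
      (-c * x / (x ^ 2 + I) ^ 2 + 1 / x ^ 2) x := by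
  have hden : HasDerivAt (fun y : ℝ => 2 * (y ^ 2 + I)) (2 * (2 * x)) x := by
    simpa using ((hasDerivAt_pow 2 x).add_const I).const_mul 2
  have hinv : HasDerivAt (fun y : ℝ => 1 / y) (-(1 / x ^ 2)) x := by
    simpa [one_div] using hasDerivAt_inv hx
  refine (((hasDerivAt_const x c).fun_div hden (mul_ne_zero two_ne_zero hxI)).fun_sub hinv).congr_deriv ?_
  field_simp
  ring

theorem hasDerivAt_deriv_effectivePotential (hx : x ≠ 0) (hxI : x ^ 2 + I ≠ 0) :
    HasDerivAt (fun y => -c * y / (y ^ 2 + I) ^ 2 + 1 / y ^ 2)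
      (c * (3 * x ^ 2 - I) / (x ^ 2 + I) ^ 3 - 2 / x ^ 3) x := by
  have hnum : HasDerivAt (fun y : ℝ => -c * y) (-c) x := by
    simpa using (hasDerivAt_id x).const_mul (-c)
  have hden : HasDerivAt (fun y : ℝ => (y ^ 2 + I) ^ 2) (2 * (x ^ 2 + I) * (2 * x)) x := by
    simpa using ((hasDerivAt_pow 2 x).add_const I).fun_pow 2
  have hsq : HasDerivAt (fun y : ℝ => 1 / y ^ 2) (-(2 * x) / (x ^ 2) ^ 2) x := by
    simpa using (hasDerivAt_pow 2 x).fun_inv (pow_ne_zero 2 hx)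
  refine ((hnum.fun_div hden (pow_ne_zero 2 hxI)).fun_add hsq).congr_deriv ?_
  field_simp
  ring

theorem deriv_deriv_effectivePotential (hx : x ≠ 0) (hxI : x ^ 2 + I ≠ 0) :
    deriv (deriv (fun y => c / (2 * (y ^ 2 + I)) - 1 / y)) x =
      c * (3 * x ^ 2 - I) / (x ^ 2 + I) ^ 3 - 2 / x ^ 3 := by
  have hnear : ∀ᶠ y in nhds x, y ≠ 0 ∧ y ^ 2 + I ≠ 0 :=
    (eventually_ne_nhds hx).and
      ((by fun_prop : Continuous fun y : ℝ => y ^ 2 + I).continuousAt.eventually_ne hxI)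
  have hderiv : deriv (fun y => c / (2 * (y ^ 2 + I)) - 1 / y) =ᶠ[nhds x]
      fun y => -c * y / (y ^ 2 + I) ^ 2 + 1 / y ^ 2 := by
    filter_upwards [hnear] with y ⟨hy, hyI⟩
    exact (hasDerivAt_effectivePotential hy hyI).deriv
  rw [hderiv.deriv_eq, (hasDerivAt_deriv_effectivePotential hx hxI).deriv]

end EffectivePotential

theorem stabilityFactor_eq {r I : ℝ} (hr : r ≠ 0) (hrI : r ^ 2 + I ≠ 0) :
    (4 / (r ^ 2 + I) - 3 / r ^ 2) / r = (r ^ 2 - 3 * I) / (r ^ 3 * (r ^ 2 + I)) := by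
  field_simp
  ring

theorem stabilityFactor_pos_iff {r I : ℝ} (hr : 0 < r) (hrI : 0 < r ^ 2 + I) :
    (4 / (r ^ 2 + I) - 3 / r ^ 2) / r > 0 ↔ r ^ 2 > 3 * I := by
  rw [stabilityFactor_eq hr.ne' hrI.ne', gt_iff_lt, div_pos_iff_of_pos_right (by positivity),
    sub_pos]

theorem full_two_body_stability_criterion
    (Is : ℝ) (hIs : 0 < Is) :
    ∀ r : ℝ, 0 < r →
      deriv (deriv (fun x => ((r ^ 2 + Is) ^ 2 / r ^ 3) / (2 * (x ^ 2 + Is)) - 1 / x)) r =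
        (4 / (r ^ 2 + Is) - 3 / r ^ 2) / r ∧
      ((4 / (r ^ 2 + Is) - 3 / r ^ 2) / r > 0 ↔ r ^ 2 > 3 * Is) := by
  intro r hr
  have hrI : 0 < r ^ 2 + Is := by positivity
  refine ⟨?_, stabilityFactor_pos_iff hr hrI⟩
  rw [deriv_deriv_effectivePotential hr.ne' hrI.ne', stabilityFactor_eq hr.ne' hrI.ne']
  field_simp
  ring
end

section
/- For constant-density spheres, the normalized rotational inertia I_s = (m₁+m₂)(m₁d₁² + m₂d₂²)/(10 m₁ m₂ d₁₂²) with d₁₂ = (d₁+d₂)/2 and equal densities (so m_i ∝ d_i³) is minimized over mass ratios when m₁ = m₂, with minimum value 2/5. -/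
theorem Is_minimized_at_equal_masses
    (d₁ d₂ ρ : ℝ) (hd₁ : 0 < d₁) (hd₂ : 0 < d₂) (hρ : 0 < ρ)
    (m₁ m₂ d₁₂ Is : ℝ)
    (hm₁ : m₁ = (Real.pi / 6) * ρ * d₁ ^ 3) (hm₂ : m₂ = (Real.pi / 6) * ρ * d₂ ^ 3)
    (hd₁₂ : d₁₂ = (d₁ + d₂) / 2)
    (hIs : Is = (m₁ + m₂) * (m₁ * d₁ ^ 2 + m₂ * d₂ ^ 2) / (10 * m₁ * m₂ * d₁₂ ^ 2)) :
    2 / 5 ≤ Is ∧ (Is = 2 / 5 ↔ d₁ = d₂) := by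
  have hπ : Real.pi ≠ 0 := Real.pi_ne_zero
  have hρ' : ρ ≠ 0 := ne_of_gt hρ
  have h1 : d₁ ≠ 0 := ne_of_gt hd₁
  have h2 : d₂ ≠ 0 := ne_of_gt hd₂
  have hs : d₁ + d₂ ≠ 0 := ne_of_gt (by linarith)
  have hden : (0:ℝ) < (5/2) * d₁^3 * d₂^3 * (d₁+d₂)^2 := by positivity
  have key : Is = 2/5 + (d₁^4 - d₂^4)^2 / ((5/2) * d₁^3 * d₂^3 * (d₁+d₂)^2) := by
    subst hm₁ hm₂ hd₁₂ hIs
    field_simp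
    ring
  constructor
  · rw [key]
    have : (0:ℝ) ≤ (d₁^4 - d₂^4)^2 / ((5/2) * d₁^3 * d₂^3 * (d₁+d₂)^2) := by positivity
    linarith
  · rw [key]
    constructor
    · intro h
      have h0 : (d₁^4 - d₂^4)^2 / ((5/2) * d₁^3 * d₂^3 * (d₁+d₂)^2) = 0 := by linarith
      have h4 : (d₁^4 - d₂^4)^2 = 0 := by
        rcases div_eq_zero_iff.mp h0 with h | h
        · exact h
        · exact absurd h (ne_of_gt hden)
      have h5 : d₁^4 = d₂^4 := by nlinarith [sq_nonneg (d₁^4 - d₂^4)]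
      by_contra hne
      rcases lt_or_gt_of_ne hne with h' | h'
      · exact absurd h5 (ne_of_lt (pow_lt_pow_left₀ h' hd₁.le (by norm_num)))
      · exact absurd h5 (ne_of_gt (pow_lt_pow_left₀ h' hd₂.le (by norm_num)))
    · intro h
      rw [h]
      ring
end

section
/- Comparison of Euler and Lagrange orbital energies: with E_OE(R) = −(5/(24R³))(6R² − 0.9) and E_OL(R) = −(1/(2R³))(3R² − 0.9), one has E_OE(R) < E_OL(R) if and only if R² < 63/60. -/
theorem euler_lagrange_orbital_energy_comparison (R : ℝ) (hR : 0 < R) :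
    -(5 / (24 * R ^ 3)) * (6 * R ^ 2 - 0.9) < -(1 / (2 * R ^ 3)) * (3 * R ^ 2 - 0.9) ↔
      R ^ 2 < 63 / 60 := by
  have h3 : (0:ℝ) < R ^ 3 := by positivity
  rw [← sub_pos]
  have key : -(1 / (2 * R ^ 3)) * (3 * R ^ 2 - 0.9) - -(5 / (24 * R ^ 3)) * (6 * R ^ 2 - 0.9)
      = (6.3 - 6 * R ^ 2) / (24 * R ^ 3) := by
    field_simp
    ring
  rw [key, div_pos_iff]
  constructor
  · rintro (⟨h1, _⟩ | ⟨_, h2⟩) <;> nlinarith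
  · intro h
    left
    constructor <;> nlinarith
end
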